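/- arXiv:2401.01516 — 2 statements merged into one kernel-verified Lean document; each statement's English description precedes it below -/
import Mathlib

section
/- For two agents with additive scaled utilities over indivisible goods, there always exists an EF1 allocation whose social welfare is at least 7/8 of the optimal social welfare; equivalently, the price of EF1 for two agents with scaled utilities is at most 8/7. -/
open Finset

/-- EF1 for two agents: for each agent, either the other's bundle is empty or the envy
disappears after removing some single good from the other's bundle. -/
def EF1 {G : Type*} [DecidableEq G] (u1 u2 : G → ℝ) (A1 A2 : Finset G) : Prop :=
  (A2 = ∅ ∨ ∃ g ∈ A2, ∑ x ∈ A2.erase g, u1 x ≤ ∑ x ∈ A1, u1 x) ∧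
  (A1 = ∅ ∨ ∃ g ∈ A1, ∑ x ∈ A1.erase g, u2 x ≤ ∑ x ∈ A2, u2 x)


lemma prefix_split {G : Type*} (w : G → ℝ) :
    ∀ (l : List G) (β : ℝ), 0 ≤ β → (∀ i ∈ l, 0 ≤ w i) → β < (l.map w).sum →
    ∃ p c q, l = p ++ c :: q ∧ (p.map w).sum ≤ β ∧ β < (p.map w).sum + w c := by
  intro l
  induction l with
  | nil => intro β hβ _ hlt; simp at hlt; linarith
  | cons a t ih =>
    intro β hβ hnn hlt
    by_cases hca : β < w a
    · exact ⟨[], a, t, rfl, by simpa using hβ, by simpa using hca⟩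
    · push_neg at hca
      have hnn' : ∀ i ∈ t, 0 ≤ w i := fun i hi => hnn i (List.mem_cons_of_mem _ hi)
      have hlt' : β - w a < (t.map w).sum := by simp at hlt; linarith
      obtain ⟨p, c, q, hpq, h1, h2⟩ := ih (β - w a) (by linarith) hnn' hlt'
      exact ⟨a :: p, c, q, by rw [hpq]; rfl, by simp; linarith, by simp; linarith⟩

lemma suffix_density {G : Type*} (w e : G → ℝ) :
    ∀ (p q : List G), (∀ i ∈ p, ∀ j ∈ q, e j * w i ≤ e i * w j) →
    (q.map e).sum * (p.map w).sum ≤ (q.map w).sum * (p.map e).sum := by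
  intro p
  induction p with
  | nil => intro q _; simp
  | cons a t ih =>
    intro q hpq
    have h1 : (q.map e).sum * (t.map w).sum ≤ (q.map w).sum * (t.map e).sum :=
      ih q (fun i hi j hj => hpq i (List.mem_cons_of_mem _ hi) j hj)
    have h2 : (q.map e).sum * w a ≤ (q.map w).sum * e a := by
      have hpt : ∀ j ∈ q, e j * w a ≤ w j * e a := by
        intro j hj
        have := hpq a (List.mem_cons_self) j hj
        linarith
      calc (q.map e).sum * w a = (q.map (fun j => e j * w a)).sum := by
              rw [← List.sum_map_mul_right]
        _ ≤ (q.map (fun j => w j * e a)).sum := List.sum_le_sum hpt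
        _ = (q.map w).sum * e a := by rw [← List.sum_map_mul_right]
    simp only [List.map_cons, List.sum_cons]
    nlinarith [h1, h2]

lemma exists_sorted {G : Type*} [DecidableEq G] (k : G → ℝ) (s : Finset G) :
    ∃ l : List G, l.Nodup ∧ l.toFinset = s ∧ l.Pairwise (fun i j => k j ≤ k i) := by
  induction s using Finset.strongInduction with
  | _ s ih =>
    rcases s.eq_empty_or_nonempty with rfl | hne
    · exact ⟨[], by simp⟩
    · obtain ⟨m, hm, hmax⟩ := s.exists_max_image k hne
      obtain ⟨l, hnd, hfs, hp⟩ := ih (s.erase m) (Finset.erase_ssubset hm)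
      refine ⟨m :: l, ?_, ?_, ?_⟩
      · refine List.nodup_cons.2 ⟨?_, hnd⟩
        intro hmem
        exact (Finset.notMem_erase m s) (hfs ▸ List.mem_toFinset.2 hmem)
      · rw [List.toFinset_cons, hfs, Finset.insert_erase hm]
      · refine List.pairwise_cons.2 ⟨?_, hp⟩
        intro j hj
        exact hmax j (Finset.mem_of_mem_erase (hfs ▸ List.mem_toFinset.2 hj))

lemma leaf0 (A x : ℝ) (hA : 0 < A) (hx : 0 ≤ x) (hax : A + x ≤ 1) (hw : 1 - x ≤ 2*A) :
    0 ≤ A + (1-A-x)*(4-7*A-4*x) := by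
  nlinarith [mul_nonneg (by linarith : (0:ℝ) ≤ 1-A-x) (by linarith : (0:ℝ) ≤ 2*A+x-1),
    sq_nonneg (1-A-x), sq_nonneg (1-x), mul_nonneg hx (by linarith : (0:ℝ) ≤ 1-A-x)]

lemma leafA (A x : ℝ) (hA : 0 < A) (hx : 0 ≤ x) (hax : A + x ≤ 1) (hw : 1 - x ≤ 2*A)
    (hAx : A ≤ x) : 0 ≤ 2*A + (1-A-x)*(4-14*A-4*x) := by
  nlinarith [mul_nonneg (by linarith : (0:ℝ) ≤ 1-A-x) (by linarith : (0:ℝ) ≤ 2*A+x-1),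
    sq_nonneg (1-A-x), mul_nonneg (by linarith : (0:ℝ) ≤ x-A) (by linarith : (0:ℝ) ≤ 1-A-x),
    sq_nonneg (3*A+3*x-2)]

lemma leafx (A x : ℝ) (hA : 0 < A) (hx : 0 ≤ x) (hax : A + x ≤ 1) (hw : 1 - x ≤ 2*A)
    (hxA : x ≤ A) : 0 ≤ (A+x) + (1-A-x)*(4-7*A-11*x) := by
  nlinarith [mul_nonneg (by linarith : (0:ℝ) ≤ 1-A-x) (by linarith : (0:ℝ) ≤ 2*A+x-1),
    sq_nonneg (1-A-x), mul_nonneg (by linarith : (0:ℝ) ≤ A-x) (by linarith : (0:ℝ) ≤ 1-A-x),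
    sq_nonneg (3*A+3*x-2)]

lemma ineqL3 (A x t E : ℝ) (hA : 0 < A) (ht : 0 ≤ t) (htx : t ≤ x) (htA : t ≤ A)
    (hE : 0 ≤ E) (hsum : A + x + E ≤ 1) (hω : 1 - x ≤ 2 * A) :
    8 * E * ((A - (1 - x) / 2) + t) ≤ (1 + E) * (A + t) := by
  have hx : 0 ≤ x := le_trans ht htx
  have hE' : E ≤ 1 - A - x := by linarith
  have hax : A + x ≤ 1 := by linarith
  rcases le_or_gt 0 (4-7*A-4*x-7*t) with hc | hc
  · nlinarith [mul_nonneg hE hc]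
  · have h1 : (1-A-x)*(4-7*A-4*x-7*t) ≤ E*(4-7*A-4*x-7*t) :=
      mul_le_mul_of_nonpos_right hE' (le_of_lt hc)
    rcases le_or_gt 0 (7*A+7*x-6) with hd | hd
    · have := leaf0 A x hA hx hax hω
      nlinarith [mul_nonneg ht hd]
    · rcases le_total A x with hAx | hxA
      · have := leafA A x hA hx hax hω hAx
        nlinarith [mul_nonneg (by linarith : (0:ℝ) ≤ A - t) (by linarith : (0:ℝ) ≤ 6-7*A-7*x)]
      · have := leafx A x hA hx hax hω hxA
        nlinarith [mul_nonneg (by linarith : (0:ℝ) ≤ x - t) (by linarith : (0:ℝ) ≤ 6-7*A-7*x)]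


lemma chainCase1 (A β wc wq wp ep ec eq' Eb E eh : ℝ)
    (hA0 : 0 < A) (hwc : 0 < wc) (hec0 : 0 ≤ ec) (heq0 : 0 ≤ eq') (hep0 : 0 ≤ ep)
    (hEb0 : 0 ≤ Eb) (hβ0 : 0 ≤ β) (hwq0 : 0 ≤ wq) (hwp0 : 0 ≤ wp)
    (hAsum : A = wp + wc + wq) (hpc : β < wp + wc)
    (hEl : ep + ec + eq' ≤ Eb) (hEeq : E = eh + Eb)
    (hS1 : (ec + eq') * wp ≤ (wc + wq) * ep)
    (hcase : Eb * wc ≤ eh * A)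
    (hk3 : 8 * E * ((A - β) + wc) ≤ (1 + E) * (A + wc)) :
    ec + eq' ≤ (1 + E) / 8 := by
  have hωA : (0:ℝ) ≤ A - β := by linarith
  have ka : (ec + eq') * A ≤ (wc + wq) * (ep + ec + eq') := by nlinarith [hS1]
  have kb : (wc + wq) * (ep + ec + eq') ≤ ((A - β) + wc) * Eb :=
    mul_le_mul (by linarith) hEl (by linarith) (by linarith)
  have k2 : Eb * (A + wc) ≤ E * A := by nlinarith [hcase]
  have c1 : (ec + eq') * A * (A + wc) ≤ ((A - β) + wc) * Eb * (A + wc) :=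
    mul_le_mul_of_nonneg_right (le_trans ka kb) (by linarith)
  have c2 : ((A - β) + wc) * (Eb * (A + wc)) ≤ ((A - β) + wc) * (E * A) :=
    mul_le_mul_of_nonneg_left k2 (by linarith)
  have c3 : 8 * E * ((A - β) + wc) * A ≤ (1 + E) * (A + wc) * A :=
    mul_le_mul_of_nonneg_right hk3 hA0.le
  have final : (ec + eq') * (8 * (A * (A + wc))) ≤ ((1 + E) / 8) * (8 * (A * (A + wc))) := by
    nlinarith [c1, c2, c3]
  exact le_of_mul_le_mul_right final (by positivity)

lemma chainCase2 (A β wc wq wp ep ec eq' Eb E eh : ℝ)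
    (hA0 : 0 < A) (hwc : 0 < wc) (hec0 : 0 ≤ ec) (heq0 : 0 ≤ eq') (hep0 : 0 ≤ ep)
    (hEb0 : 0 ≤ Eb) (hβ0 : 0 ≤ β) (hwq0 : 0 ≤ wq) (hwp0 : 0 ≤ wp) (heh0 : 0 ≤ eh)
    (hAsum : A = wp + wc + wq) (hpc : β < wp + wc)
    (hEl : ep + ec + eq' ≤ Eb) (hEeq : E = eh + Eb)
    (hS2 : eq' * (wp + wc) ≤ wq * (ep + ec))
    (hcase : eh * A ≤ Eb * wc)
    (hk3 : 8 * E * ((A - β) + wc) ≤ (1 + E) * (A + wc)) :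
    eh + eq' ≤ (1 + E) / 8 := by
  have hωA : (0:ℝ) ≤ A - β := by linarith
  have hwqω : wq ≤ A - β := by linarith
  have ka : eq' * A ≤ wq * (ep + ec + eq') := by nlinarith [hS2]
  have kb : wq * (ep + ec + eq') ≤ (A - β) * Eb :=
    mul_le_mul hwqω hEl (by linarith) hωA
  have k1 : (eh + eq') * A ≤ eh * A + (A - β) * Eb := by nlinarith [le_trans ka kb]
  have k2 : (eh * A + (A - β) * Eb) * (A + wc) ≤ E * A * ((A - β) + wc) := by
    have hid : (0:ℝ) ≤ (A - (A - β)) * (wc * Eb - A * eh) :=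
      mul_nonneg (by linarith) (by nlinarith [hcase])
    rw [hEeq]
    nlinarith [hid]
  have c1 : (eh + eq') * A * (A + wc) ≤ (eh * A + (A - β) * Eb) * (A + wc) :=
    mul_le_mul_of_nonneg_right k1 (by linarith)
  have c3 : 8 * E * ((A - β) + wc) * A ≤ (1 + E) * (A + wc) * A :=
    mul_le_mul_of_nonneg_right hk3 hA0.le
  have final : (eh + eq') * (8 * (A * (A + wc))) ≤ ((1 + E) / 8) * (8 * (A * (A + wc))) := by
    nlinarith [c1, k2, c3]
  exact le_of_mul_le_mul_right final (by positivity)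

lemma claimG {G : Type*} [DecidableEq G] (L : Finset G) (w e : G → ℝ)
    (hw : ∀ i ∈ L, 0 ≤ w i) (he : ∀ i ∈ L, 0 ≤ e i)
    (hsum : ∑ i ∈ L, w i + ∑ i ∈ L, e i ≤ 1) :
    ∃ D ⊆ L, (∑ i ∈ L \ D, e i ≤ (1 + ∑ i ∈ L, e i) / 8) ∧
      (D = ∅ ∨ ∃ d ∈ D, 2 * ∑ i ∈ D, w i ≤ 1 + w d) := by
  classical
  have hE0 : (0:ℝ) ≤ ∑ i ∈ L, e i := Finset.sum_nonneg he
  have hW0 : (0:ℝ) ≤ ∑ i ∈ L, w i := Finset.sum_nonneg hw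
  rcases L.eq_empty_or_nonempty with rfl | hne
  · refine ⟨∅, by simp, by simp, Or.inl rfl⟩
  obtain ⟨h, hh, hmax⟩ := L.exists_max_image w hne
  by_cases hbig : 2 * ∑ i ∈ L, w i ≤ 1 + w h
  · refine ⟨L, le_refl _, ?_, Or.inr ⟨h, hh, hbig⟩⟩
    simp only [Finset.sdiff_self, Finset.sum_empty]
    linarith
  push_neg at hbig
  set W := ∑ i ∈ L, w i with hWdef
  set E := ∑ i ∈ L, e i with hEdef
  set x := w h with hxdef
  set L1 := L.erase h with hL1def
  set L0 := L1.filter (fun i => 0 < w i) with hL0def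
  set Z := L1.filter (fun i => ¬ 0 < w i) with hZdef
  have hL1L : L1 ⊆ L := Finset.erase_subset _ _
  have hL0L1 : L0 ⊆ L1 := Finset.filter_subset _ _
  have hZL1 : Z ⊆ L1 := Finset.filter_subset _ _
  have hL0L : L0 ⊆ L := hL0L1.trans hL1L
  have hZL : Z ⊆ L := hZL1.trans hL1L
  have hWsplit : x + ∑ i ∈ L1, w i = W := Finset.add_sum_erase L w hh
  have hEsplit0 : e h + ∑ i ∈ L1, e i = E := Finset.add_sum_erase L e hh
  have hw1 : ∑ i ∈ L1, w i = ∑ i ∈ L0, w i + ∑ i ∈ Z, w i :=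
    (Finset.sum_filter_add_sum_filter_not L1 _ w).symm
  have he1 : ∑ i ∈ L1, e i = ∑ i ∈ L0, e i + ∑ i ∈ Z, e i :=
    (Finset.sum_filter_add_sum_filter_not L1 _ e).symm
  have hZw : ∑ i ∈ Z, w i = 0 :=
    Finset.sum_eq_zero fun i hi =>
      le_antisymm (not_lt.1 (Finset.mem_filter.1 hi).2) (hw i (hZL hi))
  have hZe : (0:ℝ) ≤ ∑ i ∈ Z, e i := Finset.sum_nonneg fun i hi => he i (hZL hi)
  set A := ∑ i ∈ L0, w i with hAdef
  have hAW : x + A = W := by rw [← hWsplit, hw1, hZw]; ring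
  have hx0 : (0:ℝ) ≤ x := hw h hh
  have hxW : x ≤ W := Finset.single_le_sum hw hh
  have hW1 : W ≤ 1 := by linarith
  set β := (1 - x) / 2 with hβdef
  have hβ0 : (0:ℝ) ≤ β := by rw [hβdef]; linarith
  have hβA : β < A := by rw [hβdef]; linarith
  -- sorted list of L0
  obtain ⟨l, hnd, hfs, hsort⟩ := exists_sorted (fun i => e i / w i) L0
  have hmeml : ∀ i ∈ l, i ∈ L0 := fun i hi => hfs ▸ List.mem_toFinset.2 hi
  have hlw : (l.map w).sum = A := by rw [hAdef, ← hfs, List.sum_toFinset w hnd]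
  have hle : (l.map e).sum = ∑ i ∈ L0, e i := by rw [← hfs, List.sum_toFinset e hnd]
  obtain ⟨p, c, q, hl, hp, hpc⟩ := prefix_split w l β hβ0
    (fun i hi => hw i (hL0L (hmeml i hi))) (by rw [hlw]; exact hβA)
  have hcl : c ∈ l := by rw [hl]; exact List.mem_append_right _ (List.mem_cons_self)
  have hpl : ∀ i ∈ p, i ∈ l := by intro i hi; rw [hl]; exact List.mem_append_left _ hi
  have hql : ∀ j ∈ q, j ∈ l := by
    intro j hj; rw [hl]; exact List.mem_append_right _ (List.mem_cons_of_mem c hj)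
  have hcL0 : c ∈ L0 := hmeml c hcl
  have hwc : 0 < w c := (Finset.mem_filter.1 hcL0).2
  have hcL : c ∈ L := hL0L hcL0
  have hndl : (p ++ c :: q).Nodup := hl ▸ hnd
  have hndp : p.Nodup := hndl.of_append_left
  have hcnotp : c ∉ p := by
    intro hcp
    have := List.disjoint_of_nodup_append hndl hcp
    exact this (List.mem_cons_self)
  -- density facts
  have hsort' : (p ++ c :: q).Pairwise (fun i j => e j / w j ≤ e i / w i) := hl ▸ hsort
  have hcross : ∀ i ∈ l, ∀ j ∈ l, e j / w j ≤ e i / w i → e j * w i ≤ e i * w j := by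
    intro i hi j hj hk
    have hwi : 0 < w i := (Finset.mem_filter.1 (hmeml i hi)).2
    have hwj : 0 < w j := (Finset.mem_filter.1 (hmeml j hj)).2
    exact (div_le_div_iff₀ hwj hwi).1 hk
  obtain ⟨hPp, hPcq, hmid⟩ := List.pairwise_append.1 hsort'
  obtain ⟨hcq, hPq⟩ := List.pairwise_cons.1 hPcq
  have S1 : ((c::q).map e).sum * (p.map w).sum ≤ ((c::q).map w).sum * (p.map e).sum :=
    suffix_density w e p (c::q) (fun i hi j hj =>
      hcross i (hpl i hi) j (by rw [hl]; exact List.mem_append_right _ hj) (hmid i hi j hj))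
  have S2 : (q.map e).sum * ((p++[c]).map w).sum ≤ (q.map w).sum * ((p++[c]).map e).sum := by
    apply suffix_density w e (p++[c]) q
    intro i hi j hj
    rcases List.mem_append.1 hi with hip | hic
    · exact hcross i (hpl i hip) j (hql j hj) (hmid i hip j (List.mem_cons_of_mem c hj))
    · have : i = c := by simpa using hic
      subst this
      exact hcross i hcl j (hql j hj) (hcq j hj)
  set wp := (p.map w).sum with hwpdef
  set ep := (p.map e).sum with hepdef
  set wq := (q.map w).sum with hwqdef
  set eq' := (q.map e).sum with heqdef
  have hwp0 : 0 ≤ wp := List.sum_nonneg (by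
    intro a ha; simp only [List.mem_map] at ha; obtain ⟨i, hi, rfl⟩ := ha
    exact hw i (hL0L (hmeml i (hpl i hi))))
  have hwq0 : 0 ≤ wq := List.sum_nonneg (by
    intro a ha; simp only [List.mem_map] at ha; obtain ⟨i, hi, rfl⟩ := ha
    exact hw i (hL0L (hmeml i (hql i hi))))
  have hep0 : 0 ≤ ep := List.sum_nonneg (by
    intro a ha; simp only [List.mem_map] at ha; obtain ⟨i, hi, rfl⟩ := ha
    exact he i (hL0L (hmeml i (hpl i hi))))
  have heq0 : 0 ≤ eq' := List.sum_nonneg (by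
    intro a ha; simp only [List.mem_map] at ha; obtain ⟨i, hi, rfl⟩ := ha
    exact he i (hL0L (hmeml i (hql i hi))))
  have hec0 : 0 ≤ e c := he c hcL
  have heh0 : 0 ≤ e h := he h hh
  have hAsum : A = wp + w c + wq := by
    rw [← hlw, hl]; simp [hwpdef, hwqdef]; ring
  have hElsum : (l.map e).sum = ep + e c + eq' := by
    rw [hl]; simp [hepdef, heqdef]; ring
  have hA0 : 0 < A := by rw [hAsum]; nlinarith [hwc]
  have htx : w c ≤ x := hmax c hcL
  have htA : w c ≤ A := by rw [hAsum]; linarith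
  set Eb := ∑ i ∈ L1, e i with hEbdef
  have hEb0 : 0 ≤ Eb := Finset.sum_nonneg fun i hi => he i (hL1L hi)
  have hEl_le : ep + e c + eq' ≤ Eb := by
    rw [he1, ← hle, hElsum]; linarith
  have hEE : E = e h + Eb := by rw [← hEsplit0]
  have hE1 : (0:ℝ) ≤ E := hE0
  have hAxE : A + x + E ≤ 1 := by rw [hEdef]; linarith [hAW, hsum]
  have hωh : 1 - x ≤ 2 * A := by linarith [hβA]
  have k3 := ineqL3 A x (w c) E hA0 (le_of_lt hwc) htx htA hE1 hAxE hωh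
  -- simplify S1, S2
  simp only [List.map_cons, List.sum_cons, List.map_append, List.sum_append,
    List.map_nil, List.sum_nil] at S1 S2
  -- S1 : (e c + eq') * wp ≤ (w c + wq) * ep ; S2 : eq' * (wp + w c) ≤ wq * (ep + e c)
  have hpfs_sub : p.toFinset ⊆ L0 := fun i hi => hmeml i (hpl i (List.mem_toFinset.1 hi))
  have hdisjL0Z : Disjoint L0 Z := Finset.disjoint_filter_filter_not L1 L1 _
  have hdisjPZ : Disjoint p.toFinset Z := Finset.disjoint_of_subset_left hpfs_sub hdisjL0Z
  have hsumPw : (p.toFinset).sum w = wp := List.sum_toFinset w hndp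
  have hsumPe : (p.toFinset).sum e = ep := List.sum_toFinset e hndp
  have hAt0 : (0:ℝ) < A + w c := by linarith
  have hwt0 : (0:ℝ) ≤ (A - β) + w c := by linarith
  have hωA : A - β ≤ A := by linarith
  have hwqω : wq ≤ A - β := by
    have : A = wp + w c + wq := hAsum
    linarith [hpc]
  rcases le_or_gt (Eb * w c) (e h * A) with hcase | hcase
  · -- keep h: D = insert h (p.toFinset ∪ Z), drop = e c + eq'
    set D := insert h (p.toFinset ∪ Z) with hDdef
    have hhnotin : h ∉ p.toFinset ∪ Z := by
      intro hmem
      rcases Finset.mem_union.1 hmem with hm | hm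
      · exact (Finset.notMem_erase h L) (hL0L1 (hpfs_sub hm))
      · exact (Finset.notMem_erase h L) (hZL1 hm)
    have hDL : D ⊆ L :=
      Finset.insert_subset hh (Finset.union_subset (hpfs_sub.trans hL0L) hZL)
    have hDw : ∑ i ∈ D, w i = x + wp := by
      rw [hDdef, Finset.sum_insert hhnotin, Finset.sum_union hdisjPZ, hsumPw, hZw, ← hxdef]
      ring
    have hDe : ∑ i ∈ D, e i = e h + (ep + ∑ i ∈ Z, e i) := by
      rw [hDdef, Finset.sum_insert hhnotin, Finset.sum_union hdisjPZ, hsumPe]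
    have hdropval : ∑ i ∈ L \ D, e i = e c + eq' := by
      rw [Finset.sum_sdiff_eq_sub hDL, hDe]
      have h2 := he1
      have h3 := hle
      have h4 := hElsum
      have h5 := hEsplit0
      linarith
    refine ⟨D, hDL, ?_, Or.inr ⟨h, Finset.mem_insert_self _ _, ?_⟩⟩
    · rw [hdropval]
      have k3' : 8 * E * ((A - β) + w c) ≤ (1 + E) * (A + w c) := by
        rw [hβdef]; exact k3
      exact chainCase1 A β (w c) wq wp ep (e c) eq' Eb E (e h) hA0 hwc hec0 heq0 hep0
        hEb0 hβ0 hwq0 hwp0 hAsum hpc hEl_le hEsplit0.symm (by linarith [S1]) hcase k3'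
    · rw [hDw, ← hxdef]
      have := hp
      rw [hβdef] at this
      linarith
  · -- keep c: D = insert c (p.toFinset ∪ Z), drop = e h + eq'
    set D := insert c (p.toFinset ∪ Z) with hDdef
    have hcnotin : c ∉ p.toFinset ∪ Z := by
      intro hmem
      rcases Finset.mem_union.1 hmem with hm | hm
      · exact hcnotp (List.mem_toFinset.1 hm)
      · exact (Finset.disjoint_left.1 hdisjL0Z hcL0) hm
    have hDL : D ⊆ L :=
      Finset.insert_subset hcL (Finset.union_subset (hpfs_sub.trans hL0L) hZL)
    have hDw : ∑ i ∈ D, w i = w c + wp := by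
      rw [hDdef, Finset.sum_insert hcnotin, Finset.sum_union hdisjPZ, hsumPw, hZw]
      ring
    have hDe : ∑ i ∈ D, e i = e c + (ep + ∑ i ∈ Z, e i) := by
      rw [hDdef, Finset.sum_insert hcnotin, Finset.sum_union hdisjPZ, hsumPe]
    have hdropval : ∑ i ∈ L \ D, e i = e h + eq' := by
      rw [Finset.sum_sdiff_eq_sub hDL, hDe]
      have h2 := he1
      have h3 := hle
      have h4 := hElsum
      have h5 := hEsplit0
      linarith
    refine ⟨D, hDL, ?_, Or.inr ⟨c, Finset.mem_insert_self _ _, ?_⟩⟩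
    · rw [hdropval]
      have k3' : 8 * E * ((A - β) + w c) ≤ (1 + E) * (A + w c) := by
        rw [hβdef]; exact k3
      exact chainCase2 A β (w c) wq wp ep (e c) eq' Eb E (e h) hA0 hwc hec0 heq0 hep0
        hEb0 hβ0 hwq0 hwp0 heh0 hAsum hpc hEl_le hEsplit0.symm (by linarith [S2])
        hcase.le k3'
    · rw [hDw]
      have := hp
      rw [hβdef] at this
      linarith

lemma main_half {G : Type*} [DecidableEq G] (M O1 O2 : Finset G) (u1 u2 : G → ℝ)
    (hdisj : Disjoint O1 O2) (hunion : O1 ∪ O2 = M)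
    (h1nn : ∀ g ∈ M, 0 ≤ u1 g) (h2nn : ∀ g ∈ M, 0 ≤ u2 g)
    (hs1 : ∑ g ∈ M, u1 g = 1) (hs2 : ∑ g ∈ M, u2 g = 1)
    (hO1 : ∀ g ∈ O1, u2 g ≤ u1 g) (hO2 : ∀ g ∈ O2, u1 g ≤ u2 g)
    (ha : ∑ g ∈ O1, u1 g < 1/2) :
    ∃ A1 A2 : Finset G, Disjoint A1 A2 ∧ A1 ∪ A2 = M ∧ EF1 u1 u2 A1 A2 ∧
      (7/8) * (1 + ∑ g ∈ O2, (u2 g - u1 g)) ≤ ∑ g ∈ A1, u1 g + ∑ g ∈ A2, u2 g := by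
  classical
  have hO1M : O1 ⊆ M := hunion ▸ Finset.subset_union_left
  have hO2M : O2 ⊆ M := hunion ▸ Finset.subset_union_right
  have hsplit1 : ∑ g ∈ O1, u1 g + ∑ g ∈ O2, u1 g = 1 := by
    rw [← Finset.sum_union hdisj, hunion, hs1]
  have hsplit2 : ∑ g ∈ O1, u2 g + ∑ g ∈ O2, u2 g = 1 := by
    rw [← Finset.sum_union hdisj, hunion, hs2]
  have hsub : ∑ g ∈ O2, (u2 g - u1 g) = ∑ g ∈ O2, u2 g - ∑ g ∈ O2, u1 g :=
    Finset.sum_sub_distrib _ _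
  have hs0 : (0:ℝ) ≤ ∑ g ∈ O2, (u2 g - u1 g) :=
    Finset.sum_nonneg fun g hg => sub_nonneg.2 (hO2 g hg)
  have hO1u2nn : (0:ℝ) ≤ ∑ g ∈ O1, u2 g :=
    Finset.sum_nonneg fun g hg => h2nn g (hO1M hg)
  -- apply claimG
  obtain ⟨D, hDO2, hdrop, hfeas⟩ := claimG O2 u1 (fun g => u2 g - u1 g)
    (fun i hi => h1nn i (hO2M hi)) (fun i hi => sub_nonneg.2 (hO2 i hi))
    (by rw [hsub]; linarith)
  set a := ∑ g ∈ O1, u1 g with hadef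
  set Feas : Finset G → Prop := fun S =>
    (O2 \ S = ∅) ∨ ∃ z ∈ O2 \ S, ∑ g ∈ (O2 \ S).erase z, u1 g ≤ a + ∑ g ∈ S, u1 g
    with hFeasdef
  set F : Finset (Finset G) := O2.powerset.filter Feas with hFdef
  have hmemF : ∀ S, S ∈ F ↔ S ⊆ O2 ∧ Feas S := by
    intro S
    rw [hFdef, Finset.mem_filter, Finset.mem_powerset]
  have hS0F : O2 \ D ∈ F := by
    rw [hmemF]
    refine ⟨Finset.sdiff_subset, ?_⟩
    rcases hfeas with rfl | ⟨d, hdD, hd⟩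
    · left; simp
    · right
      have hrec : O2 \ (O2 \ D) = D := Finset.sdiff_sdiff_eq_self hDO2
      rw [hrec]
      refine ⟨d, hdD, ?_⟩
      have h1 : ∑ g ∈ D.erase d, u1 g = ∑ g ∈ D, u1 g - u1 d :=
        Finset.sum_erase_eq_sub hdD
      have h2 : ∑ g ∈ O2 \ D, u1 g + ∑ g ∈ D, u1 g = ∑ g ∈ O2, u1 g :=
        Finset.sum_sdiff hDO2
      linarith
  obtain ⟨S1x, hS1F, hS1min⟩ := F.exists_min_image
    (fun S => ∑ g ∈ S, (u2 g - u1 g)) ⟨_, hS0F⟩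
  set F2 := F.filter (fun S => ∑ g ∈ S, (u2 g - u1 g) ≤ ∑ g ∈ S1x, (u2 g - u1 g))
    with hF2def
  obtain ⟨S, hSF2, hScard⟩ := F2.exists_min_image (fun S => (S.card : ℕ))
    ⟨S1x, Finset.mem_filter.2 ⟨hS1F, le_refl _⟩⟩
  obtain ⟨hSF, hSex⟩ := Finset.mem_filter.1 hSF2
  obtain ⟨hSO2, hSFeas⟩ := (hmemF S).1 hSF
  have hSmin : ∀ T ∈ F, ∑ g ∈ S, (u2 g - u1 g) ≤ ∑ g ∈ T, (u2 g - u1 g) :=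
    fun T hT => le_trans hSex (hS1min T hT)
  have hrem : ∀ z ∈ S, ¬ Feas (S.erase z) := by
    intro z hz hFz
    have hsub' : S.erase z ⊆ O2 := (Finset.erase_subset _ _).trans hSO2
    have hmem : S.erase z ∈ F := (hmemF _).2 ⟨hsub', hFz⟩
    have hexc : ∑ g ∈ S.erase z, (u2 g - u1 g) ≤ ∑ g ∈ S1x, (u2 g - u1 g) := by
      have he : ∑ g ∈ S.erase z, (u2 g - u1 g) = ∑ g ∈ S, (u2 g - u1 g) - (u2 z - u1 z) :=
        Finset.sum_erase_eq_sub hz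
      have hz2 : 0 ≤ u2 z - u1 z := sub_nonneg.2 (hO2 z (hSO2 hz))
      linarith
    have hcard := hScard _ (Finset.mem_filter.2 ⟨hmem, hexc⟩)
    have hlt : (S.erase z).card < S.card := Finset.card_erase_lt_of_mem hz
    omega
  have hO2ne : O2.Nonempty := by
    rcases O2.eq_empty_or_nonempty with rfl | h
    · simp only [Finset.sum_empty] at hsplit1; rw [hadef] at ha; linarith
    · exact h
  have hA2ne : (O2 \ S).Nonempty := by
    rw [Finset.sdiff_nonempty]
    intro hsub'
    have hSeq : S = O2 := Finset.Subset.antisymm hSO2 hsub'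
    obtain ⟨z, hz⟩ := hO2ne
    have hzS : z ∈ S := hSeq ▸ hz
    apply hrem z hzS
    rw [hFeasdef]
    right
    have hid : O2 \ S.erase z = {z} := by
      rw [hSeq]
      ext g
      simp only [Finset.mem_sdiff, Finset.mem_erase, Finset.mem_singleton]
      constructor
      · rintro ⟨hg, hg2⟩
        by_contra hne
        exact hg2 ⟨hne, hg⟩
      · rintro rfl
        exact ⟨hz, fun h => h.1 rfl⟩
    rw [hid]
    refine ⟨z, Finset.mem_singleton_self z, ?_⟩
    rw [Finset.erase_singleton]
    simp only [Finset.sum_empty]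
    have h1 : 0 ≤ ∑ g ∈ S.erase z, u1 g :=
      Finset.sum_nonneg fun g hg => h1nn g (hO2M (hSO2 (Finset.mem_of_mem_erase hg)))
    have h2 : 0 ≤ a := Finset.sum_nonneg fun g hg => h1nn g (hO1M hg)
    linarith
  set A1 := O1 ∪ S with hA1def
  set A2 := O2 \ S with hA2def
  have hdisjO1S : Disjoint O1 S := hdisj.mono_right hSO2
  have hdisjA : Disjoint A1 A2 := by
    rw [hA1def, Finset.disjoint_union_left]
    exact ⟨hdisj.mono_right Finset.sdiff_subset, Finset.disjoint_sdiff⟩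
  have hunionA : A1 ∪ A2 = M := by
    rw [hA1def, hA2def, Finset.union_assoc, Finset.union_sdiff_of_subset hSO2, hunion]
  have hsumA1u1 : ∑ g ∈ A1, u1 g = a + ∑ g ∈ S, u1 g := Finset.sum_union hdisjO1S
  have hsumA2u1 : ∑ g ∈ A2, u1 g + ∑ g ∈ S, u1 g = ∑ g ∈ O2, u1 g := Finset.sum_sdiff hSO2
  have hsumA2e : ∑ g ∈ A2, (u2 g - u1 g) + ∑ g ∈ S, (u2 g - u1 g) = ∑ g ∈ O2, (u2 g - u1 g) :=
    Finset.sum_sdiff hSO2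
  have hsumA2sub : ∑ g ∈ A2, (u2 g - u1 g) = ∑ g ∈ A2, u2 g - ∑ g ∈ A2, u1 g :=
    Finset.sum_sub_distrib _ _
  have hsumSsub : ∑ g ∈ S, (u2 g - u1 g) = ∑ g ∈ S, u2 g - ∑ g ∈ S, u1 g :=
    Finset.sum_sub_distrib _ _
  have hA2u2ge : ∑ g ∈ A2, u1 g ≤ ∑ g ∈ A2, u2 g :=
    Finset.sum_le_sum fun g hg => hO2 g (Finset.mem_sdiff.1 hg).1
  have hA1A2u2 : ∑ g ∈ A1, u2 g + ∑ g ∈ A2, u2 g = 1 := by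
    rw [← Finset.sum_union hdisjA, hunionA, hs2]
  -- excess bound
  have hexcS : ∑ g ∈ S, (u2 g - u1 g) ≤ (1 + ∑ g ∈ O2, (u2 g - u1 g)) / 8 := by
    refine le_trans (hSmin _ hS0F) ?_
    exact hdrop
  -- EF1 agent 1
  have hef1a : ∃ z ∈ A2, ∑ x ∈ A2.erase z, u1 x ≤ ∑ x ∈ A1, u1 x := by
    rcases hSFeas with hempty | ⟨z, hz, hle⟩
    · exact absurd hempty (Finset.nonempty_iff_ne_empty.1 hA2ne)
    · exact ⟨z, hz, by rw [hsumA1u1]; exact hle⟩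
  -- EF1 agent 2
  have hef1b : A1 = ∅ ∨ ∃ z ∈ A1, ∑ x ∈ A1.erase z, u2 x ≤ ∑ x ∈ A2, u2 x := by
    rcases S.eq_empty_or_nonempty with rfl | ⟨z, hz⟩
    · -- S = ∅ : A1 = O1
      have hA1O1 : A1 = O1 := by rw [hA1def, Finset.union_empty]
      rcases O1.eq_empty_or_nonempty with rfl | ⟨z, hz⟩
      · left; rw [hA1O1]
      · right
        refine ⟨z, by rw [hA1O1]; exact hz, ?_⟩
        have h1 : ∑ x ∈ A1.erase z, u2 x = ∑ x ∈ A1, u2 x - u2 z :=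
          Finset.sum_erase_eq_sub (by rw [hA1O1]; exact hz)
        have h2 : ∑ x ∈ A1, u2 x = ∑ x ∈ O1, u2 x := by rw [hA1O1]
        have h3 : ∑ x ∈ A2, u2 x = ∑ x ∈ O2, u2 x := by
          rw [hA2def, Finset.sdiff_empty]
        have h4 : 0 ≤ u2 z := h2nn z (hO1M hz)
        have h5 : ∑ g ∈ O2, u1 g ≤ ∑ g ∈ O2, u2 g := Finset.sum_le_sum hO2
        -- 1 - b ≤ b since b ≥ 1 - a > 1/2
        rw [h1, h2, h3]
        linarith
    · right
      have hzO2 : z ∈ O2 := hSO2 hz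
      have hzA1 : z ∈ A1 := Finset.mem_union_right _ hz
      have hnf : ¬ ((O2 \ S.erase z = ∅) ∨ ∃ z' ∈ O2 \ S.erase z,
          ∑ g ∈ (O2 \ S.erase z).erase z', u1 g ≤ a + ∑ g ∈ S.erase z, u1 g) := hrem z hz
      push_neg at hnf
      obtain ⟨hne', hforall⟩ := hnf
      have hid : O2 \ S.erase z = insert z A2 := by
        rw [hA2def]
        ext g
        simp only [Finset.mem_sdiff, Finset.mem_erase, Finset.mem_insert]
        constructor
        · rintro ⟨hg, hg2⟩
          by_cases hgz : g = z
          · exact Or.inl hgz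
          · exact Or.inr ⟨hg, fun hgs => hg2 ⟨hgz, hgs⟩⟩
        · rintro (rfl | ⟨hg, hgs⟩)
          · exact ⟨hzO2, fun h => h.1 rfl⟩
          · exact ⟨hg, fun h => hgs h.2⟩
      have hzmem : z ∈ O2 \ S.erase z := by
        rw [hid]; exact Finset.mem_insert_self _ _
      have hkey := hforall z hzmem
      have hznA2 : z ∉ A2 := by
        rw [hA2def]; simp only [Finset.mem_sdiff]; exact fun h => h.2 hz
      have hid2 : (O2 \ S.erase z).erase z = A2 := by
        rw [hid, Finset.erase_insert hznA2]
      rw [hid2] at hkey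
      have hSz : ∑ g ∈ S.erase z, u1 g = ∑ g ∈ S, u1 g - u1 z :=
        Finset.sum_erase_eq_sub hz
      -- hkey : a + ∑_{S.erase z} u1 < ∑_{A2} u1
      have hu12z : u1 z ≤ u2 z := hO2 z hzO2
      refine ⟨z, hzA1, ?_⟩
      have h1 : ∑ x ∈ A1.erase z, u2 x = ∑ x ∈ A1, u2 x - u2 z :=
        Finset.sum_erase_eq_sub hzA1
      rw [h1]
      -- 2 * Σ_{A2} u2 ≥ 2 * Σ_{A2} u1 > 1 - u1 z ≥ 1 - u2 z
      linarith
  -- welfare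
  refine ⟨A1, A2, hdisjA, hunionA, ⟨Or.inr hef1a, hef1b⟩, ?_⟩
  rw [hsumA1u1]
  linarith


/-- For two agents with additive scaled utilities over indivisible goods,
there exists an EF1 allocation whose social welfare is at least `7/8` of the optimal
social welfare, i.e., the price of EF1 is at most `8/7`. -/
theorem stmt_3 {G : Type*} [DecidableEq G] (M : Finset G) (u1 u2 : G → ℝ)
    (h1nn : ∀ g ∈ M, 0 ≤ u1 g) (h2nn : ∀ g ∈ M, 0 ≤ u2 g)
    (hs1 : ∑ g ∈ M, u1 g = 1) (hs2 : ∑ g ∈ M, u2 g = 1) :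
    ∃ A1 A2 : Finset G, Disjoint A1 A2 ∧ A1 ∪ A2 = M ∧ EF1 u1 u2 A1 A2 ∧
      ∀ B1 B2 : Finset G, Disjoint B1 B2 → B1 ∪ B2 = M →
        ∑ g ∈ B1, u1 g + ∑ g ∈ B2, u2 g ≤
          (8 / 7 : ℝ) * (∑ g ∈ A1, u1 g + ∑ g ∈ A2, u2 g) := by

  classical
  set O1 := M.filter (fun g => u2 g ≤ u1 g) with hO1def
  set O2 := M.filter (fun g => ¬ (u2 g ≤ u1 g)) with hO2def
  have hdisj : Disjoint O1 O2 := Finset.disjoint_filter_filter_not M M _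
  have hunion : O1 ∪ O2 = M := Finset.filter_union_filter_not_eq _ M
  have hO1le : ∀ g ∈ O1, u2 g ≤ u1 g := fun g hg => (Finset.mem_filter.1 hg).2
  have hO2le : ∀ g ∈ O2, u1 g ≤ u2 g :=
    fun g hg => le_of_lt (not_le.1 (Finset.mem_filter.1 hg).2)
  have hO1M : O1 ⊆ M := Finset.filter_subset _ _
  have hO2M : O2 ⊆ M := Finset.filter_subset _ _
  have hsplit1 : ∑ g ∈ O1, u1 g + ∑ g ∈ O2, u1 g = 1 := by
    rw [← Finset.sum_union hdisj, hunion, hs1]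
  have hsplit2 : ∑ g ∈ O1, u2 g + ∑ g ∈ O2, u2 g = 1 := by
    rw [← Finset.sum_union hdisj, hunion, hs2]
  set s := ∑ g ∈ O2, (u2 g - u1 g) with hsdef
  have hsub : s = ∑ g ∈ O2, u2 g - ∑ g ∈ O2, u1 g := Finset.sum_sub_distrib _ _
  have hs0 : (0:ℝ) ≤ s := Finset.sum_nonneg fun g hg => sub_nonneg.2 (hO2le g hg)
  -- OPT bound
  have hopt : ∀ B1 B2 : Finset G, Disjoint B1 B2 → B1 ∪ B2 = M →
      ∑ g ∈ B1, u1 g + ∑ g ∈ B2, u2 g ≤ 1 + s := by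
    intro B1 B2 hd hu
    have hB1M : B1 ⊆ M := hu ▸ Finset.subset_union_left
    have hB2M : B2 ⊆ M := hu ▸ Finset.subset_union_right
    have h1 : ∑ g ∈ B1, u1 g ≤ ∑ g ∈ B1, max (u1 g) (u2 g) :=
      Finset.sum_le_sum fun g _ => le_max_left _ _
    have h2 : ∑ g ∈ B2, u2 g ≤ ∑ g ∈ B2, max (u1 g) (u2 g) :=
      Finset.sum_le_sum fun g _ => le_max_right _ _
    have h3 : ∑ g ∈ B1, max (u1 g) (u2 g) + ∑ g ∈ B2, max (u1 g) (u2 g)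
        = ∑ g ∈ M, max (u1 g) (u2 g) := by rw [← Finset.sum_union hd, hu]
    have h4 : ∑ g ∈ M, max (u1 g) (u2 g)
        = ∑ g ∈ O1, max (u1 g) (u2 g) + ∑ g ∈ O2, max (u1 g) (u2 g) := by
      rw [← Finset.sum_union hdisj, hunion]
    have h5 : ∑ g ∈ O1, max (u1 g) (u2 g) = ∑ g ∈ O1, u1 g :=
      Finset.sum_congr rfl fun g hg => max_eq_left (hO1le g hg)
    have h6 : ∑ g ∈ O2, max (u1 g) (u2 g) = ∑ g ∈ O2, u2 g :=
      Finset.sum_congr rfl fun g hg => max_eq_right (hO2le g hg)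
    linarith
  -- find EF1 allocation with welfare ≥ 7/8 (1+s)
  have hmain : ∃ A1 A2 : Finset G, Disjoint A1 A2 ∧ A1 ∪ A2 = M ∧ EF1 u1 u2 A1 A2 ∧
      (7/8) * (1 + s) ≤ ∑ g ∈ A1, u1 g + ∑ g ∈ A2, u2 g := by
    by_cases ha : ∑ g ∈ O1, u1 g < 1/2
    · exact main_half M O1 O2 u1 u2 hdisj hunion h1nn h2nn hs1 hs2 hO1le hO2le ha
    · by_cases hb : ∑ g ∈ O2, u2 g < 1/2
      · obtain ⟨A1', A2', hd', hu', hef', hw'⟩ :=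
          main_half M O2 O1 u2 u1 hdisj.symm (by rw [Finset.union_comm, hunion])
            h2nn h1nn hs2 hs1 hO2le hO1le hb
        refine ⟨A2', A1', hd'.symm, by rw [Finset.union_comm, hu'], ⟨hef'.2, hef'.1⟩, ?_⟩
        have hseq : ∑ g ∈ O1, (u1 g - u2 g) = s := by
          have h7 : ∑ g ∈ O1, (u1 g - u2 g) = ∑ g ∈ O1, u1 g - ∑ g ∈ O1, u2 g :=
            Finset.sum_sub_distrib _ _
          rw [hsub] at *
          linarith
        rw [hseq] at hw'
        linarith
      · push_neg at ha hb
        refine ⟨O1, O2, hdisj, hunion, ⟨?_, ?_⟩, ?_⟩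
        · rcases O2.eq_empty_or_nonempty with he | ⟨g, hg⟩
          · exact Or.inl he
          · right
            refine ⟨g, hg, ?_⟩
            have h1 : ∑ x ∈ O2.erase g, u1 x = ∑ x ∈ O2, u1 x - u1 g :=
              Finset.sum_erase_eq_sub hg
            have h2 : 0 ≤ u1 g := h1nn g (hO2M hg)
            linarith
        · rcases O1.eq_empty_or_nonempty with he | ⟨g, hg⟩
          · exact Or.inl he
          · right
            refine ⟨g, hg, ?_⟩
            have h1 : ∑ x ∈ O1.erase g, u2 x = ∑ x ∈ O1, u2 x - u2 g :=
              Finset.sum_erase_eq_sub hg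
            have h2 : 0 ≤ u2 g := h2nn g (hO1M hg)
            linarith
        · rw [hsub]
          linarith
  obtain ⟨A1, A2, hdA, huA, hefA, hwA⟩ := hmain
  refine ⟨A1, A2, hdA, huA, hefA, ?_⟩
  intro B1 B2 hd hu
  have := hopt B1 B2 hd hu
  linarith
end

section
/- There exists an instance of two agents with additive scaled utilities over indivisible goods in which every EF1 allocation has social welfare at most 7/8 of the optimal social welfare; hence the price of EF1 for two agents with scaled utilities is at least 8/7 (as a supremum over instances, with instances approaching the bound). -/
/-!
Agent 1 values only goods `0` and `1`, at `1/2` each; agent 2 values them at `1/3 + δ` each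
and goods `2`, `3` at `1/6 - δ` each. Giving `{0, 1}` to agent 1 has welfare `4/3 - 2δ`. Since
agent 2 values each of `0`, `1` at more than a third of everything, agent 2 envies agent 1
beyond one good as soon as agent 1 holds both; so in an EF1 allocation agent 1 holds at most
one of them and the welfare is at most `1/2 + (1 - (1/3 + δ)) = 7/6 - δ`. As `δ → 0` the
ratio tends to `(7/6) / (4/3) = 7/8`.
-/

open Finset

theorem Finset.sum_le_sum_sub_sum_of_disjoint {ι β : Type*} [DecidableEq ι] [AddCommGroup β]
    [PartialOrder β] [IsOrderedAddMonoid β] {u : ι → β} {M s t : Finset ι}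
    (hu : ∀ x ∈ M, 0 ≤ u x) (hs : s ⊆ M) (ht : t ⊆ M) (hst : Disjoint s t) :
    ∑ x ∈ s, u x ≤ ∑ x ∈ M, u x - ∑ x ∈ t, u x := by
  rw [le_sub_iff_add_le, ← sum_union hst]
  exact sum_le_sum_of_subset_of_nonneg (union_subset hs ht) fun x hx _ ↦ hu x hx

theorem EF1.not_mem_and_mem_of_three_mul_gt {G : Type*} [DecidableEq G] {u1 u2 : G → ℝ}
    {M A1 A2 : Finset G} (hEF1 : EF1 u1 u2 A1 A2) (hdisj : Disjoint A1 A2)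
    (hunion : A1 ∪ A2 = M) (hu2 : ∀ g ∈ M, 0 ≤ u2 g) {a b : G} (hab : a ≠ b)
    (ha : ∑ g ∈ M, u2 g < 3 * u2 a) (hb : ∑ g ∈ M, u2 g < 3 * u2 b) :
    ¬ (a ∈ A1 ∧ b ∈ A1) := by
  rintro ⟨haA, hbA⟩
  have hA1 : A1 ⊆ M := hunion ▸ subset_union_left
  obtain hempty | ⟨g, -, henvy⟩ := hEF1.2
  · simp [hempty] at haA
  have hA2 : ∑ x ∈ A2, u2 x ≤ ∑ x ∈ M, u2 x - (u2 a + u2 b) := by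
    rw [← sum_pair hab]
    refine sum_le_sum_sub_sum_of_disjoint hu2 (hunion ▸ subset_union_right)
      (insert_subset (hA1 haA) (singleton_subset_iff.2 (hA1 hbA))) ?_
    exact disjoint_of_subset_right (insert_subset haA (singleton_subset_iff.2 hbA)) hdisj.symm
  have hleft (c : G) (hc : c ∈ A1) (hcg : c ≠ g) : u2 c ≤ ∑ x ∈ A1.erase g, u2 x :=
    single_le_sum (fun x hx ↦ hu2 x (hA1 (mem_of_mem_erase hx))) (mem_erase.2 ⟨hcg, hc⟩)
  -- at least one of `a`, `b` survives the removal of `g`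
  by_cases hag : a = g
  · have := hleft b hbA (hag ▸ hab.symm)
    linarith
  · have := hleft a haA hag
    linarith

noncomputable def hardUtility₁ : Fin 4 → ℝ := ![1 / 2, 1 / 2, 0, 0]

noncomputable def hardUtility₂ (δ : ℝ) : Fin 4 → ℝ := ![1 / 3 + δ, 1 / 3 + δ, 1 / 6 - δ, 1 / 6 - δ]

theorem hardUtility₁_nonneg (g : Fin 4) : 0 ≤ hardUtility₁ g := by
  fin_cases g <;> norm_num [hardUtility₁]

theorem hardUtility₂_nonneg {δ : ℝ} (hδ : 0 ≤ δ) (hδ' : δ ≤ 1 / 6) (g : Fin 4) :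
    0 ≤ hardUtility₂ δ g := by
  fin_cases g <;> simp [hardUtility₂] <;> linarith

theorem sum_hardUtility₁ : ∑ g, hardUtility₁ g = 1 := by
  rw [Fin.sum_univ_four]
  simp only [hardUtility₁, Matrix.cons_val]
  norm_num

theorem sum_hardUtility₂ (δ : ℝ) : ∑ g, hardUtility₂ δ g = 1 := by
  rw [Fin.sum_univ_four]
  simp only [hardUtility₂, Matrix.cons_val]
  ring

@[simp] theorem hardUtility₁_zero : hardUtility₁ 0 = 1 / 2 := rfl

@[simp] theorem hardUtility₁_one : hardUtility₁ 1 = 1 / 2 := rfl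

@[simp] theorem hardUtility₂_zero (δ : ℝ) : hardUtility₂ δ 0 = 1 / 3 + δ := rfl

@[simp] theorem hardUtility₂_one (δ : ℝ) : hardUtility₂ δ 1 = 1 / 3 + δ := rfl

theorem welfare_le_of_EF1_hardUtility {δ : ℝ} (hδ : 0 < δ) (hδ' : δ ≤ 1 / 6)
    {A1 A2 : Finset (Fin 4)} (hdisj : Disjoint A1 A2) (hunion : A1 ∪ A2 = univ)
    (hEF1 : EF1 hardUtility₁ (hardUtility₂ δ) A1 A2) :
    ∑ g ∈ A1, hardUtility₁ g + ∑ g ∈ A2, hardUtility₂ δ g ≤ 7 / 6 - δ := by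
  have hu₁ (g : Fin 4) (_ : g ∈ univ) := hardUtility₁_nonneg g
  have hu₂ (g : Fin 4) (_ : g ∈ univ) := hardUtility₂_nonneg hδ.le hδ' g
  have hpair : ¬ (0 ∈ A1 ∧ 1 ∈ A1) :=
    hEF1.not_mem_and_mem_of_three_mul_gt hdisj hunion hu₂ (by decide)
      (by rw [sum_hardUtility₂, hardUtility₂_zero]; linarith)
      (by rw [sum_hardUtility₂, hardUtility₂_one]; linarith)
  have hA2 : ∑ g ∈ A2, hardUtility₂ δ g ≤ 1 - ∑ g ∈ A1, hardUtility₂ δ g := by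
    simpa [sum_hardUtility₂] using
      sum_le_sum_sub_sum_of_disjoint hu₂ (subset_univ A2) (subset_univ A1) hdisj.symm
  have hA1 (t : Finset (Fin 4)) (ht : Disjoint A1 t) :
      ∑ g ∈ A1, hardUtility₁ g ≤ 1 - ∑ g ∈ t, hardUtility₁ g := by
    simpa [sum_hardUtility₁] using
      sum_le_sum_sub_sum_of_disjoint hu₁ (subset_univ A1) (subset_univ t) ht
  have hbig (a : Fin 4) (ha : a ∈ A1) : hardUtility₂ δ a ≤ ∑ g ∈ A1, hardUtility₂ δ g :=
    single_le_sum (fun g _ ↦ hu₂ g (mem_univ g)) ha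
  by_cases h0 : 0 ∈ A1
  · have h1 : 1 ∉ A1 := fun h1 ↦ hpair ⟨h0, h1⟩
    have hu₁A1 := hA1 {1} (disjoint_singleton_right.2 h1)
    have hu₂A1 := hbig 0 h0
    simp only [sum_singleton, hardUtility₁_one, hardUtility₂_zero] at hu₁A1 hu₂A1
    linarith
  by_cases h1 : 1 ∈ A1
  · have hu₁A1 := hA1 {0} (disjoint_singleton_right.2 h0)
    have hu₂A1 := hbig 1 h1
    simp only [sum_singleton, hardUtility₁_zero, hardUtility₂_one] at hu₁A1 hu₂A1
    linarith
  · have hu₁A1 := hA1 {0, 1} (disjoint_insert_right.2 ⟨h0, disjoint_singleton_right.2 h1⟩)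
    have hu₂A1 : 0 ≤ ∑ g ∈ A1, hardUtility₂ δ g := sum_nonneg fun g _ ↦ hu₂ g (mem_univ g)
    rw [sum_pair (by decide), hardUtility₁_zero, hardUtility₁_one] at hu₁A1
    linarith

/-- There are two-agent scaled instances of indivisible-goods allocation in
which every EF1 allocation has social welfare arbitrarily close to (at most) `7/8` of the
optimal social welfare; hence the price of EF1 for two agents with scaled utilities is at
least `8/7`. -/
theorem stmt_4 :
    ∀ ε : ℝ, 0 < ε →
      ∃ (n : ℕ) (M : Finset (Fin n)) (u1 u2 : Fin n → ℝ),
        (∀ g ∈ M, 0 ≤ u1 g) ∧ (∀ g ∈ M, 0 ≤ u2 g) ∧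
        (∑ g ∈ M, u1 g = 1) ∧ (∑ g ∈ M, u2 g = 1) ∧
        ∃ B1 B2 : Finset (Fin n), Disjoint B1 B2 ∧ B1 ∪ B2 = M ∧
          ∀ A1 A2 : Finset (Fin n), Disjoint A1 A2 → A1 ∪ A2 = M → EF1 u1 u2 A1 A2 →
            ∑ g ∈ A1, u1 g + ∑ g ∈ A2, u2 g ≤
              (7 / 8 + ε) * (∑ g ∈ B1, u1 g + ∑ g ∈ B2, u2 g) := by
  intro ε hε
  set δ := min ε (1 / 12)
  have hδ : 0 < δ := lt_min hε (by norm_num)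
  have hδε : δ ≤ ε := min_le_left _ _
  have hδ' : δ ≤ 1 / 12 := min_le_right _ _
  refine ⟨4, univ, hardUtility₁, hardUtility₂ δ, fun g _ ↦ hardUtility₁_nonneg g,
    fun g _ ↦ hardUtility₂_nonneg hδ.le (by linarith) g, sum_hardUtility₁, sum_hardUtility₂ δ,
    {0, 1}, {2, 3}, by decide, by decide, fun A1 A2 hdisj hunion hEF1 ↦ ?_⟩
  have hopt : ∑ g ∈ {0, 1}, hardUtility₁ g + ∑ g ∈ {2, 3}, hardUtility₂ δ g = 4 / 3 - 2 * δ := by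
    rw [sum_pair (by decide), sum_pair (by decide)]
    simp only [hardUtility₁, hardUtility₂, Matrix.cons_val]
    ring
  rw [hopt]
  have hwelfare := welfare_le_of_EF1_hardUtility hδ (by linarith) hdisj hunion hEF1
  nlinarith [mul_le_mul_of_nonneg_right hδε (show 0 ≤ 4 / 3 - 2 * δ by linarith)]
end
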